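/- Let A and B be finite dimensional algebras over a field k. If M is an injective right A-module and N is an injective right B-module, then M ⊗_k N is an injective right (A ⊗_k B)-module. -/

import Mathlib

/-!
An injective `R`-module `V` is a direct summand of the coinduced module `Hom_k(R, V)`, and the
coinduced module is injective as soon as `V` is an injective `k`-module, since
`Hom_R(Y, Hom_k(R, V)) ≃ Hom_k(Y, V)`. For finite-dimensional `A` and `B` the canonical map
`Hom_k(A, M) ⊗ Hom_k(B, N) → Hom_k(A ⊗ B, M ⊗ N)` is an `A ⊗ B`-linear isomorphism, so the
tensor product of the two retractions exhibits `M ⊗ N` as a direct summand of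
`Hom_k(A ⊗ B, M ⊗ N)`, which is injective because every vector space is.
-/

open TensorProduct

universe u

theorem Module.Injective.of_retraction {R : Type*} [Ring R] {Q P : Type u}
    [AddCommGroup Q] [Module R Q] [AddCommGroup P] [Module R P] [Module.Injective R P]
    (j : Q →ₗ[R] P) (r : P →ₗ[R] Q) (hrj : r ∘ₗ j = LinearMap.id) :
    Module.Injective R Q :=
  ⟨fun _ _ _ _ _ _ i hi g ↦
    let ⟨G, hG⟩ := Module.Injective.out i hi (j ∘ₗ g)
    ⟨r ∘ₗ G, fun x ↦ by simp [hG, ← LinearMap.comp_apply r j, hrj]⟩⟩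

section TensorProductAction

variable {k A B P Q : Type*} [CommRing k] [Ring A] [Ring B] [Algebra k A] [Algebra k B]
  [AddCommGroup P] [Module (A ⊗[k] B) P] [AddCommGroup Q] [Module (A ⊗[k] B) Q]

def LinearMap.ofMapSMulTmul (f : P →+ Q)
    (hf : ∀ (a : A) (b : B) p, f ((a ⊗ₜ[k] b) • p) = (a ⊗ₜ[k] b) • f p) :
    P →ₗ[A ⊗[k] B] Q where
  __ := f
  map_smul' x p := by
    induction x using TensorProduct.induction_on with
    | zero => simp
    | tmul a b => exact hf a b p
    | add x y hx hy => simp_all [add_smul]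

end TensorProductAction

section TmulAction

variable {k A B M N : Type*} [CommRing k] [Ring A] [Ring B] [Algebra k A] [Algebra k B]
  [AddCommGroup M] [Module k M] [Module A M] [IsScalarTower k A M]
  [AddCommGroup N] [Module k N] [Module B N] [Module (A ⊗[k] B) (M ⊗[k] N)]

theorem isScalarTower_of_tmul_smul_tmul
    (hsmul : ∀ (a : A) (b : B) (m : M) (n : N),
      (a ⊗ₜ[k] b) • (m ⊗ₜ[k] n) = (a • m) ⊗ₜ[k] (b • n)) :
    IsScalarTower k (A ⊗[k] B) (M ⊗[k] N) :=
  .of_algebraMap_smul fun c z ↦ by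
    induction z using TensorProduct.induction_on with
    | zero => simp
    | tmul m n =>
      rw [Algebra.TensorProduct.algebraMap_apply, hsmul, one_smul, algebraMap_smul, smul_tmul']
    | add z w hz hw => simp_all [smul_add]

end TmulAction

def Coind (k R V : Type u) [CommRing k] [Ring R] [Algebra k R] [AddCommGroup V] [Module k V] :
    Type u :=
  R →ₗ[k] V

namespace Coind

variable {k R V : Type u} [CommRing k] [Ring R] [Algebra k R] [AddCommGroup V] [Module k V]

instance : AddCommGroup (Coind k R V) := inferInstanceAs (AddCommGroup (R →ₗ[k] V))
instance : Module k (Coind k R V) := inferInstanceAs (Module k (R →ₗ[k] V))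
instance : FunLike (Coind k R V) R V := inferInstanceAs (FunLike (R →ₗ[k] V) R V)
instance : LinearMapClass (Coind k R V) k R V :=
  inferInstanceAs (LinearMapClass (R →ₗ[k] V) k R V)

def mk (f : R →ₗ[k] V) : Coind k R V := f

@[simp] theorem mk_apply (f : R →ₗ[k] V) (x : R) : mk f x = f x := rfl

@[ext] theorem ext {f g : Coind k R V} (h : ∀ x, f x = g x) : f = g := LinearMap.ext h

@[simp] theorem zero_apply (x : R) : (0 : Coind k R V) x = 0 := rfl
@[simp] theorem add_apply (f g : Coind k R V) (x : R) : (f + g) x = f x + g x := rfl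

instance : SMul R (Coind k R V) where
  smul r f := LinearMap.comp (M₃ := V) f (LinearMap.mulRight k r)

@[simp] theorem smul_apply (r : R) (f : Coind k R V) (x : R) : (r • f) x = f (x * r) := rfl

instance : Module R (Coind k R V) where
  one_smul _ := ext fun _ ↦ by simp
  mul_smul _ _ _ := ext fun _ ↦ by simp [mul_assoc]
  smul_zero _ := ext fun _ ↦ by simp
  smul_add _ _ _ := ext fun _ ↦ by simp
  add_smul _ _ _ := ext fun _ ↦ by simp [mul_add]
  zero_smul _ := ext fun _ ↦ by simp

instance : IsScalarTower k R (Coind k R V) :=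
  ⟨fun c r f ↦ ext fun x ↦ by
    rw [smul_apply, mul_smul_comm]
    exact map_smul f c (x * r)⟩

def lift {Y : Type u} [AddCommGroup Y] [Module R Y] [Module k Y] [IsScalarTower k R Y]
    (ψ : Y →ₗ[k] V) : Y →ₗ[R] Coind k R V where
  toFun y := mk <| ψ ∘ₗ (LinearMap.toSpanSingleton R Y y).restrictScalars k
  map_add' _ _ := ext fun _ ↦ by simp
  map_smul' _ _ := ext fun _ ↦ by simp [mul_smul]

@[simp] theorem lift_apply {Y : Type u} [AddCommGroup Y] [Module R Y] [Module k Y]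
    [IsScalarTower k R Y] (ψ : Y →ₗ[k] V) (y : Y) (x : R) : lift ψ y x = ψ (x • y) := rfl

def ι [Module R V] [IsScalarTower k R V] : V →ₗ[R] Coind k R V := lift LinearMap.id

theorem ι_injective [Module R V] [IsScalarTower k R V] :
    Function.Injective (ι : V →ₗ[R] Coind k R V) := fun v w h ↦ by
  simpa [ι] using DFunLike.congr_fun h 1

instance injective [Module.Injective k V] : Module.Injective R (Coind k R V) where
  out X Y _ _ _ _ i hi g := by
    let := Module.compHom X (algebraMap k R)
    let := Module.compHom Y (algebraMap k R)
    have : IsScalarTower k R X := .of_algebraMap_smul fun _ _ ↦ rfl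
    have : IsScalarTower k R Y := .of_algebraMap_smul fun _ _ ↦ rfl
    let evalOne : Coind k R V →ₗ[k] V := LinearMap.applyₗ (M₂ := V) (1 : R)
    obtain ⟨ψ, hψ⟩ := Module.Injective.extension_property k V X Y (i.restrictScalars k) hi
      (evalOne ∘ₗ g.restrictScalars k)
    refine ⟨lift ψ, fun x ↦ ext fun a ↦ ?_⟩
    calc lift ψ (i x) a = ψ (i (a • x)) := by simp
      _ = g (a • x) 1 := LinearMap.congr_fun hψ (a • x)
      _ = g x a := by simp

section Tensor

variable {k A B M N : Type u} [CommRing k] [Ring A] [Ring B] [Algebra k A] [Algebra k B]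
  [AddCommGroup M] [Module k M] [AddCommGroup N] [Module k N]

theorem ext_tmul {f g : Coind k (A ⊗[k] B) (M ⊗[k] N)}
    (h : ∀ a b, f (a ⊗ₜ b) = g (a ⊗ₜ b)) : f = g :=
  TensorProduct.ext' (g := (f : A ⊗[k] B →ₗ[k] M ⊗[k] N)) h

variable [Module.Projective k A] [Module.Finite k A] [Module.Projective k B] [Module.Finite k B]

variable (k A B M N) in
noncomputable def tensorEquiv :
    Coind k A M ⊗[k] Coind k B N ≃ₗ[k] Coind k (A ⊗[k] B) (M ⊗[k] N) :=
  homTensorHomEquiv k A B M N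

@[simp] theorem tensorEquiv_tmul_apply (f : Coind k A M) (g : Coind k B N) (a : A) (b : B) :
    tensorEquiv k A B M N (f ⊗ₜ g) (a ⊗ₜ b) = f a ⊗ₜ g b :=
  LinearMap.congr_fun (homTensorHomEquiv_apply (R := k) (f ⊗ₜ g)) (a ⊗ₜ b)

theorem tensorEquiv_smul_tmul (a : A) (b : B) (f : Coind k A M) (g : Coind k B N) :
    tensorEquiv k A B M N ((a • f) ⊗ₜ[k] (b • g)) =
      (a ⊗ₜ[k] b) • tensorEquiv k A B M N (f ⊗ₜ g) :=
  ext_tmul fun _ _ ↦ by simp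

end Tensor

end Coind

namespace Coind

section Retraction

variable {k A B M N : Type u} [CommRing k] [Ring A] [Ring B] [Algebra k A] [Algebra k B]
  [Module.Projective k A] [Module.Finite k A] [Module.Projective k B] [Module.Finite k B]
  [AddCommGroup M] [Module k M] [Module A M] [IsScalarTower k A M]
  [AddCommGroup N] [Module k N] [Module B N] [IsScalarTower k B N]
  [Module (A ⊗[k] B) (M ⊗[k] N)]

noncomputable def tensorRetraction
    (hsmul : ∀ (a : A) (b : B) (m : M) (n : N),
      (a ⊗ₜ[k] b) • (m ⊗ₜ[k] n) = (a • m) ⊗ₜ[k] (b • n))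
    (rM : Coind k A M →ₗ[A] M) (rN : Coind k B N →ₗ[B] N) :
    Coind k (A ⊗[k] B) (M ⊗[k] N) →ₗ[A ⊗[k] B] M ⊗[k] N :=
  LinearMap.ofMapSMulTmul
    (map (rM.restrictScalars k) (rN.restrictScalars k) ∘ₗ
      (tensorEquiv k A B M N).symm.toLinearMap).toAddMonoidHom
    fun a b F ↦ by
      obtain ⟨t, rfl⟩ := (tensorEquiv k A B M N).surjective F
      induction t using TensorProduct.induction_on with
      | zero => simp
      | tmul f g => simp [← tensorEquiv_smul_tmul, hsmul]
      | add s t hs ht => simp_all [smul_add]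

theorem ι_tmul [IsScalarTower k (A ⊗[k] B) (M ⊗[k] N)]
    (hsmul : ∀ (a : A) (b : B) (m : M) (n : N),
      (a ⊗ₜ[k] b) • (m ⊗ₜ[k] n) = (a • m) ⊗ₜ[k] (b • n)) (m : M) (n : N) :
    ι (m ⊗ₜ[k] n) = tensorEquiv k A B M N (ι m ⊗ₜ ι n) :=
  ext_tmul fun _ _ ↦ by simp [ι, hsmul]

theorem tensorRetraction_comp_ι [IsScalarTower k (A ⊗[k] B) (M ⊗[k] N)]
    (hsmul : ∀ (a : A) (b : B) (m : M) (n : N),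
      (a ⊗ₜ[k] b) • (m ⊗ₜ[k] n) = (a • m) ⊗ₜ[k] (b • n))
    {rM : Coind k A M →ₗ[A] M} {rN : Coind k B N →ₗ[B] N}
    (hrM : rM ∘ₗ ι = LinearMap.id) (hrN : rN ∘ₗ ι = LinearMap.id) :
    tensorRetraction hsmul rM rN ∘ₗ ι = LinearMap.id := by
  ext z
  induction z using TensorProduct.induction_on with
  | zero => simp
  | tmul m n =>
    simp only [tensorRetraction, LinearMap.ofMapSMulTmul, LinearMap.coe_comp,
      Function.comp_apply, ι_tmul hsmul]
    simp [← LinearMap.comp_apply rM, ← LinearMap.comp_apply rN, hrM, hrN]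
  | add z w hz hw => simp_all

end Retraction

end Coind

/-- If `M` is a injective right `A`-module and `N` is a injective right
`B`-module over finite dimensional `k`-algebras `A` and `B`, then `M ⊗_k N` is a
injective `(A ⊗_k B)`-module, where the action is given by
`(m ⊗ n) • (a ⊗ b) = (ma ⊗ nb)`. -/
theorem tensor_injective
    (k : Type u) [Field k] (A B : Type u) [Ring A] [Ring B]
    [Algebra k A] [Algebra k B] [FiniteDimensional k A] [FiniteDimensional k B]
    (M N : Type u) [AddCommGroup M] [Module k M] [Module A M] [IsScalarTower k A M]
    [AddCommGroup N] [Module k N] [Module B N] [IsScalarTower k B N]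
    [Module (A ⊗[k] B) (M ⊗[k] N)]
    (hsmul : ∀ (a : A) (b : B) (m : M) (n : N),
      (a ⊗ₜ[k] b) • (m ⊗ₜ[k] n) = (a • m) ⊗ₜ[k] (b • n))
    (hM : Module.Injective A M) (hN : Module.Injective B N) :
    Module.Injective (A ⊗[k] B) (M ⊗[k] N) := by
  have := isScalarTower_of_tmul_smul_tmul hsmul
  have := Module.injective_of_isSemisimpleRing k (M ⊗[k] N)
  obtain ⟨rM, hrM⟩ := Module.Injective.extension_property A M _ _ Coind.ι
    (Coind.ι_injective (k := k)) LinearMap.id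
  obtain ⟨rN, hrN⟩ := Module.Injective.extension_property B N _ _ Coind.ι
    (Coind.ι_injective (k := k)) LinearMap.id
  exact .of_retraction Coind.ι (Coind.tensorRetraction hsmul rM rN)
    (Coind.tensorRetraction_comp_ι hsmul hrM hrN)
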